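/- Let φ: G → H be a graph homomorphism, A ⊆ E(G) a φ-stable set, and let I be either the invariant I_A or I_{A,u} for some vertex u of H. If P and P' are homotopic walks in G, then I(P) = I(P'). -/

import Mathlib

namespace Discrete

variable {V : Type*} {W : Type*}

/-- `IsWalk G l` : the nonempty list `l` of vertices forms a walk in `G`. -/
def IsWalk (G : SimpleGraph V) : List V → Prop
  | [] => False
  | [_] => True
  | a :: b :: l => G.Adj a b ∧ IsWalk G (b :: l)

/-- One elementary homotopy step: substitution, insertion, or deletion. -/
inductive Step (G : SimpleGraph V) : List V → List V → Prop
  | sub (p q : List V) (a b c b' : V) (h1 : G.Adj a b') (h2 : G.Adj b' c) :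
      Step G (p ++ a :: b :: c :: q) (p ++ a :: b' :: c :: q)
  | ins (p q : List V) (a w : V) (h : G.Adj a w) :
      Step G (p ++ a :: q) (p ++ a :: w :: a :: q)
  | del (p q : List V) (a w : V) :
      Step G (p ++ a :: w :: a :: q) (p ++ a :: q)

/-- Two walks are homotopic if one may be transformed into the other via a
finite sequence of substitution, insertion and deletion steps. -/
def Homotopic (G : SimpleGraph V) : List V → List V → Prop :=
  Relation.ReflTransGen (Step G)

/-- The multiset of edges of a walk, counted with multiplicity. -/
def walkEdges (l : List V) : Multiset (Sym2 V) :=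
  ↑((l.zip l.tail).map (Function.uncurry Sym2.mk))

/-- A closed walk: a walk whose endpoints coincide. -/
def IsClosedWalk (G : SimpleGraph V) (l : List V) : Prop :=
  IsWalk G l ∧ l.head? = l.getLast?

/-- A closed walk based at `v0`. -/
def IsClosedWalkAt (G : SimpleGraph V) (v0 : V) (l : List V) : Prop :=
  IsWalk G l ∧ l.head? = some v0 ∧ l.getLast? = some v0

/-- A cycle, recorded as a closed walk `v0 v1 ... v_{k-1} v0` of length at
least 3 whose vertices `v0, ..., v_{k-1}` are distinct. -/
def IsCycleList (G : SimpleGraph V) (l : List V) : Prop :=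
  IsClosedWalk G l ∧ l.dropLast.Nodup ∧ 4 ≤ l.length

/-- `G` is simply connected: any two walks with the same endpoints and lengths
of the same parity are homotopic. -/
def SimplyConnected (G : SimpleGraph V) : Prop :=
  G.Connected ∧ ∀ P P' : List V, IsWalk G P → IsWalk G P' →
    P.head? = P'.head? → P.getLast? = P'.getLast? →
    (P.length - 1) % 2 = (P'.length - 1) % 2 → Homotopic G P P'

/-- Two edges of `H` lie in a common 4-cycle of `H`. -/
def InCommonC4 (H : SimpleGraph W) (e f : Sym2 W) : Prop :=
  ∃ a b c d : W, a ≠ b ∧ a ≠ c ∧ a ≠ d ∧ b ≠ c ∧ b ≠ d ∧ c ≠ d ∧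
    H.Adj a b ∧ H.Adj b c ∧ H.Adj c d ∧ H.Adj d a ∧
    (e = s(a, b) ∨ e = s(b, c) ∨ e = s(c, d) ∨ e = s(d, a)) ∧
    (f = s(a, b) ∨ f = s(b, c) ∨ f = s(c, d) ∨ f = s(d, a))

/-- The equivalence relation on `E(H)` generated by lying in a common `C4`;
`C4Equiv H e f` says `f` lies in the `C4`-closure of `e`. -/
def C4Equiv (H : SimpleGraph W) : Sym2 W → Sym2 W → Prop :=
  Relation.EqvGen (InCommonC4 H)

/-- Two edges share an endpoint. -/
def Touch (e f : Sym2 V) : Prop := ∃ v, v ∈ e ∧ v ∈ f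

/-- `[e]_φ`: the edge set of the connected component containing `e` of the
subgraph of `G` induced by the edge set `φ⁻¹(C4-closure of φ(e))`. -/
def PhiClass {G : SimpleGraph V} {H : SimpleGraph W} (φ : G →g H) (e : Sym2 V) :
    Set (Sym2 V) :=
  {e' | Relation.ReflTransGen (fun a b =>
      a ∈ G.edgeSet ∧ b ∈ G.edgeSet ∧
      C4Equiv H (Sym2.map φ a) (Sym2.map φ e) ∧
      C4Equiv H (Sym2.map φ b) (Sym2.map φ e) ∧ Touch a b) e e'}

/-- `A ⊆ E(G)` is `φ`-stable if it is a union of classes `[e]_φ`. -/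
def PhiStable {G : SimpleGraph V} {H : SimpleGraph W} (φ : G →g H)
    (A : Set (Sym2 V)) : Prop :=
  A ⊆ G.edgeSet ∧ ∀ e ∈ A, PhiClass φ e ⊆ A

/-- `A_u`: the edges of `A` having an endpoint in `φ⁻¹(u)`. -/
def Au {G : SimpleGraph V} {H : SimpleGraph W} (φ : G →g H)
    (A : Set (Sym2 V)) (u : W) : Set (Sym2 V) :=
  {e ∈ A | ∃ v ∈ e, φ v = u}

open Classical in
/-- The intersection invariant `|F ∩ A| mod 2` of a multiset of edges. -/
noncomputable def inv2 (A : Set (Sym2 V)) (F : Multiset (Sym2 V)) : ℕ :=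
  (F.filter (· ∈ A)).card % 2

/-- Concatenation of closed walks. -/
def catWalk (l l' : List V) : List V := l ++ l'.tail

/-- `n`-fold concatenation power of a closed walk based at `v0`. -/
def powWalk (v0 : V) (l : List V) : ℕ → List V
  | 0 => [v0]
  | n + 1 => catWalk l (powWalk v0 l n)

/-- The discrete fundamental group `π₁(G)` is cyclic: some closed walk `P`
based at a vertex `v0` has the property that every closed walk based at `v0`
is homotopic to a power of `P` or of its reverse. -/
def CyclicPi1 (G : SimpleGraph V) : Prop :=
  G.Connected ∧ ∃ (v0 : V) (P : List V), IsClosedWalkAt G v0 P ∧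
    ∀ Q : List V, IsClosedWalkAt G v0 Q →
      ∃ n : ℕ, Homotopic G Q (powWalk v0 P n) ∨ Homotopic G Q (powWalk v0 P.reverse n)

/-- `H` contains no cycle of length `n`. -/
def CFree (H : SimpleGraph V) (n : ℕ) : Prop :=
  ∀ (v : V) (c : H.Walk v v), c.IsCycle → c.length ≠ n

/-!
Insertions and deletions add or remove one edge twice, so they never change a parity. A
substitution `a b c ↝ a b' c` trades the edges `ab, bc` for `ab', b'c`. If `φ b = φ b'` or
`φ a = φ c`, these edges pair off into touching edges with the same image, which lie in a common
class `[e]_φ`. Otherwise `φ a, φ b, φ c, φ b'` is a 4-cycle of `H`, so all four edges lie in one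
class, hence all in `A` or all outside it. When they all lie in `A`, each of the two paths has
`[φ a = u] + [φ c = u]` edges in `A_u` modulo 2, its middle vertex being met twice.
-/

section Walks

variable {G : SimpleGraph V}

theorem walkEdges_cons_cons (a b : V) (l : List V) :
    walkEdges (a :: b :: l) = s(a, b) ::ₘ walkEdges (b :: l) := by
  simp [walkEdges]

theorem walkEdges_append_cons (p : List V) (a : V) (q : List V) :
    walkEdges (p ++ a :: q) = walkEdges (p ++ [a]) + walkEdges (a :: q) := by
  induction p with
  | nil => simp [walkEdges]
  | cons y p ih =>
    rcases p with _ | ⟨z, p⟩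
    · simp [walkEdges]
    · simp only [List.cons_append] at ih ⊢
      rw [walkEdges_cons_cons, walkEdges_cons_cons, ih, Multiset.cons_add]

theorem walkEdges_append_cons_cons_cons (p : List V) (a b c : V) (q : List V) :
    walkEdges (p ++ a :: b :: c :: q) =
      walkEdges (p ++ [a]) + {s(a, b), s(b, c)} + walkEdges (c :: q) := by
  rw [walkEdges_append_cons, walkEdges_cons_cons, walkEdges_cons_cons, add_assoc]
  rfl

theorem isWalk_append_cons_iff (p : List V) (a : V) (l : List V) :
    IsWalk G (p ++ a :: l) ↔ IsWalk G (p ++ [a]) ∧ IsWalk G (a :: l) := by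
  induction p with
  | nil => simp [IsWalk]
  | cons y p ih =>
    rcases p with _ | ⟨z, p⟩
    · rcases l with _ | ⟨z, l⟩ <;> simp [IsWalk]
    · simp only [List.cons_append, IsWalk] at ih ⊢
      rw [ih, and_assoc]

theorem Step.isWalk {P Q : List V} (hst : Step G P Q) (hP : IsWalk G P) : IsWalk G Q := by
  cases hst with
  | sub p q a b c b' hab' hb'c =>
    rw [isWalk_append_cons_iff] at hP ⊢
    exact ⟨hP.1, hab', hb'c, hP.2.2.2⟩
  | ins p q a w haw =>
    rw [isWalk_append_cons_iff] at hP ⊢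
    exact ⟨hP.1, haw, haw.symm, hP.2⟩
  | del p q a w =>
    rw [isWalk_append_cons_iff] at hP ⊢
    exact ⟨hP.1, hP.2.2.2⟩

theorem Homotopic.isWalk {P Q : List V} (h : Homotopic G P Q) (hP : IsWalk G P) :
    IsWalk G Q := by
  induction h with
  | refl => exact hP
  | tail _ hst ih => exact hst.isWalk ih

end Walks

section Parity

open Classical

variable {B : Set (Sym2 V)}

theorem inv2_add (X Y : Multiset (Sym2 V)) :
    inv2 B (X + Y) = (inv2 B X + inv2 B Y) % 2 := by
  simp only [inv2, Multiset.filter_add, Multiset.card_add]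
  exact Nat.add_mod _ _ _

theorem inv2_add_add_congr {M M' : Multiset (Sym2 V)} (hM : inv2 B M = inv2 B M')
    (X Y : Multiset (Sym2 V)) : inv2 B (X + M + Y) = inv2 B (X + M' + Y) := by
  rw [inv2_add, inv2_add X, hM, ← inv2_add, ← inv2_add]

theorem inv2_pair (e f : Sym2 V) :
    inv2 B {e, f} = ((if e ∈ B then 1 else 0) + (if f ∈ B then 1 else 0)) % 2 := by
  simp only [inv2, Multiset.insert_eq_cons, Multiset.filter_cons, Multiset.filter_singleton]
  split_ifs <;> rfl

theorem inv2_pair_congr {e f e' f' : Sym2 V} (he : e ∈ B ↔ e' ∈ B) (hf : f ∈ B ↔ f' ∈ B) :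
    inv2 B {e, f} = inv2 B {e', f'} := by
  simp only [inv2_pair, he, hf]

theorem inv2_pair_of_iff {e f : Sym2 V} (h : e ∈ B ↔ f ∈ B) : inv2 B {e, f} = 0 := by
  rw [inv2_pair, h]
  split_ifs <;> rfl

def SubInvariant (G : SimpleGraph V) (B : Set (Sym2 V)) : Prop :=
  ∀ ⦃a b c b' : V⦄, G.Adj a b → G.Adj b c → G.Adj a b' → G.Adj b' c →
    inv2 B {s(a, b), s(b, c)} = inv2 B {s(a, b'), s(b', c)}

variable {G : SimpleGraph V}

theorem Step.inv2_eq (hB : SubInvariant G B) {P Q : List V} (hst : Step G P Q)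
    (hP : IsWalk G P) : inv2 B (walkEdges P) = inv2 B (walkEdges Q) := by
  have backtrack (p q : List V) (a w : V) :
      inv2 B (walkEdges (p ++ a :: w :: a :: q)) = inv2 B (walkEdges (p ++ a :: q)) := by
    have hpair : inv2 B {s(a, w), s(w, a)} = inv2 B 0 :=
      (inv2_pair_of_iff (iff_of_eq (congrArg (· ∈ B) Sym2.eq_swap))).trans rfl
    rw [walkEdges_append_cons_cons_cons, walkEdges_append_cons p a q, inv2_add_add_congr hpair,
      add_zero]
  cases hst with
  | sub p q a b c b' hab' hb'c =>
    obtain ⟨hab, hbc, -⟩ := ((isWalk_append_cons_iff p a _).1 hP).2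
    rw [walkEdges_append_cons_cons_cons, walkEdges_append_cons_cons_cons]
    exact inv2_add_add_congr (hB hab hbc hab' hb'c) _ _
  | ins p q a w => exact (backtrack p q a w).symm
  | del p q a w => exact backtrack p q a w

theorem Homotopic.inv2_eq (hB : SubInvariant G B) {P Q : List V} (h : Homotopic G P Q)
    (hP : IsWalk G P) : inv2 B (walkEdges P) = inv2 B (walkEdges Q) := by
  induction h with
  | refl => rfl
  | tail hPR hst ih => exact ih.trans (hst.inv2_eq hB (Homotopic.isWalk hPR hP))

end Parity

section Stable

open Classical

variable {G : SimpleGraph V} {H : SimpleGraph W} {φ : G →g H} {A : Set (Sym2 V)}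

theorem Touch.symm {e f : Sym2 V} (h : Touch e f) : Touch f e :=
  let ⟨v, he, hf⟩ := h
  ⟨v, hf, he⟩

theorem mem_Au_iff {u : W} {e : Sym2 V} : e ∈ Au φ A u ↔ e ∈ A ∧ u ∈ Sym2.map φ e := by
  simp [Au, Sym2.mem_map]

theorem PhiStable.mem_iff_of_touch (hA : PhiStable φ A) {e f : Sym2 V} (he : e ∈ G.edgeSet)
    (hf : f ∈ G.edgeSet) (hef : Touch e f) (hc : C4Equiv H (Sym2.map φ e) (Sym2.map φ f)) :
    e ∈ A ↔ f ∈ A :=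
  ⟨fun h => hA.2 e h (.single ⟨he, hf, .refl _, .symm _ _ hc, hef⟩),
    fun h => hA.2 f h (.single ⟨hf, he, .refl _, hc, hef.symm⟩)⟩

def RespectsImage (φ : G →g H) (B : Set (Sym2 V)) : Prop :=
  ∀ ⦃e f : Sym2 V⦄, e ∈ G.edgeSet → f ∈ G.edgeSet → Touch e f →
    Sym2.map φ e = Sym2.map φ f → (e ∈ B ↔ f ∈ B)

theorem PhiStable.respectsImage (hA : PhiStable φ A) : RespectsImage φ A :=
  fun _ _ he hf hef h => hA.mem_iff_of_touch he hf hef (h ▸ .refl _)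

theorem PhiStable.respectsImage_Au (hA : PhiStable φ A) (u : W) : RespectsImage φ (Au φ A u) :=
  fun _ _ he hf hef h => by rw [mem_Au_iff, mem_Au_iff, hA.respectsImage he hf hef h, h]

theorem RespectsImage.inv2_pair_eq {B : Set (Sym2 V)} (hB : RespectsImage φ B) {a b c b' : V}
    (hab : G.Adj a b) (hbc : G.Adj b c) (hab' : G.Adj a b') (hb'c : G.Adj b' c)
    (h : φ b = φ b' ∨ φ a = φ c) :
    inv2 B {s(a, b), s(b, c)} = inv2 B {s(a, b'), s(b', c)} := by
  rcases h with hbb' | hac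
  · exact inv2_pair_congr (hB hab hab' ⟨a, by simp, by simp⟩ (by simp [hbb']))
      (hB hbc hb'c ⟨c, by simp, by simp⟩ (by simp [hbb']))
  · rw [inv2_pair_of_iff (hB hab hbc ⟨b, by simp, by simp⟩ (by simp [hac, Sym2.eq_swap])),
      inv2_pair_of_iff (hB hab' hb'c ⟨b', by simp, by simp⟩ (by simp [hac, Sym2.eq_swap]))]

theorem PhiStable.mem_iff_of_square (hA : PhiStable φ A) {a b c b' : V}
    (hab : G.Adj a b) (hbc : G.Adj b c) (hab' : G.Adj a b') (hb'c : G.Adj b' c)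
    (hbb' : φ b ≠ φ b') (hac : φ a ≠ φ c) :
    (s(a, b) ∈ A ↔ s(b, c) ∈ A) ∧ (s(a, b) ∈ A ↔ s(a, b') ∈ A) ∧
      (s(a, b') ∈ A ↔ s(b', c) ∈ A) := by
  have hc : ∀ {e f : Sym2 W},
      (e = s(φ a, φ b) ∨ e = s(φ b, φ c) ∨ e = s(φ c, φ b') ∨ e = s(φ b', φ a)) →
      (f = s(φ a, φ b) ∨ f = s(φ b, φ c) ∨ f = s(φ c, φ b') ∨ f = s(φ b', φ a)) →
      C4Equiv H e f := fun he hf =>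
    .rel _ _ ⟨φ a, φ b, φ c, φ b', (φ.map_adj hab).ne, hac, (φ.map_adj hab').ne,
      (φ.map_adj hbc).ne, hbb', (φ.map_adj hb'c).ne.symm, φ.map_adj hab, φ.map_adj hbc,
      (φ.map_adj hb'c).symm, (φ.map_adj hab').symm, he, hf⟩
  refine ⟨hA.mem_iff_of_touch hab hbc ⟨b, by simp, by simp⟩ (hc ?_ ?_),
    hA.mem_iff_of_touch hab hab' ⟨a, by simp, by simp⟩ (hc ?_ ?_),
    hA.mem_iff_of_touch hab' hb'c ⟨b', by simp, by simp⟩ (hc ?_ ?_)⟩ <;> simp [Sym2.eq_swap]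

theorem inv2_Au_pair {u : W} {a b c : V} (hab : G.Adj a b) (hbc : G.Adj b c)
    (habA : s(a, b) ∈ A) (hbcA : s(b, c) ∈ A) :
    inv2 (Au φ A u) {s(a, b), s(b, c)} = ({φ a, φ c} : Multiset W).count u % 2 := by
  have hab' := (φ.map_adj hab).ne
  have hbc' := (φ.map_adj hbc).ne
  have e1 : s(a, b) ∈ Au φ A u ↔ u = φ a ∨ u = φ b := by simp [mem_Au_iff, habA]
  have e2 : s(b, c) ∈ Au φ A u ↔ u = φ b ∨ u = φ c := by simp [mem_Au_iff, hbcA]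
  rw [inv2_pair, Multiset.insert_eq_cons, Multiset.count_cons, Multiset.count_singleton]
  simp only [e1, e2]
  split_ifs <;> simp_all

theorem PhiStable.subInvariant (hA : PhiStable φ A) : SubInvariant G A := by
  intro a b c b' hab hbc hab' hb'c
  by_cases h : φ b = φ b' ∨ φ a = φ c
  · exact hA.respectsImage.inv2_pair_eq hab hbc hab' hb'c h
  push Not at h
  obtain ⟨h1, -, h3⟩ := hA.mem_iff_of_square hab hbc hab' hb'c h.1 h.2
  rw [inv2_pair_of_iff h1, inv2_pair_of_iff h3]

theorem PhiStable.subInvariant_Au (hA : PhiStable φ A) (u : W) : SubInvariant G (Au φ A u) := by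
  intro a b c b' hab hbc hab' hb'c
  by_cases h : φ b = φ b' ∨ φ a = φ c
  · exact (hA.respectsImage_Au u).inv2_pair_eq hab hbc hab' hb'c h
  push Not at h
  obtain ⟨h1, h2, h3⟩ := hA.mem_iff_of_square hab hbc hab' hb'c h.1 h.2
  by_cases habA : s(a, b) ∈ A
  · rw [inv2_Au_pair hab hbc habA (h1.1 habA),
      inv2_Au_pair hab' hb'c (h2.1 habA) (h3.1 (h2.1 habA))]
  · refine inv2_pair_congr ?_ ?_ <;> simp [mem_Au_iff, habA, ← h1, ← h2, ← h3]

end Stable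

theorem inv_homotopy_invariant_general (G : SimpleGraph V) (H : SimpleGraph W)
    (φ : G →g H) (A : Set (Sym2 V)) (hA : PhiStable φ A)
    (P P' : List V) (hP : IsWalk G P)
    (h : Homotopic G P P') :
    inv2 A (walkEdges P) = inv2 A (walkEdges P') ∧
      ∀ u : W, inv2 (Au φ A u) (walkEdges P) = inv2 (Au φ A u) (walkEdges P') :=
  ⟨h.inv2_eq hA.subInvariant hP, fun u => h.inv2_eq (hA.subInvariant_Au u) hP⟩

/-- Intersection invariants are homotopy invariants. -/
theorem inv_homotopy_invariant (G : SimpleGraph V) (H : SimpleGraph W)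
    (φ : G →g H) (A : Set (Sym2 V)) (hA : PhiStable φ A)
    (P P' : List V) (hP : IsWalk G P) (hP' : IsWalk G P')
    (h : Homotopic G P P') :
    inv2 A (walkEdges P) = inv2 A (walkEdges P') ∧
      ∀ u : W, inv2 (Au φ A u) (walkEdges P) = inv2 (Au φ A u) (walkEdges P') :=
  inv_homotopy_invariant_general G H φ A hA P P' hP h

end Discrete
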